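/- arXiv:1809.10272 — 2 statements merged into one kernel-verified Lean document; each statement's English description precedes it below -/
import Mathlib

section
/- For any n ≥ 3 and any finite-valued random variables X₁, …, Xₙ on a common probability space, DTC(X₁;…;Xₙ) = DTC(X₁;…;X_{n−1}) + ∑_{i=1}^{n−1} I(Xᵢ ; Xₙ | X_{[n−1]∖i}). -/
open MeasureTheory Real

namespace Corr

variable {Ω : Type*} [MeasurableSpace Ω]

/-- Shannon entropy of a finite-valued random variable. -/
noncomputable def shEnt {K : Type*} [Fintype K] (μ : Measure Ω) (X : Ω → K) : ℝ :=
  ∑ k : K, Real.negMulLog ((μ (X ⁻¹' {k})).toReal)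

/-- Conditional Shannon entropy `H(X | Y)`. -/
noncomputable def condEnt {K L : Type*} [Fintype K] [Fintype L]
    (μ : Measure Ω) (X : Ω → K) (Y : Ω → L) : ℝ :=
  shEnt μ (fun ω => (X ω, Y ω)) - shEnt μ Y

/-- Mutual information `I(X ; Y)`. -/
noncomputable def mutInfo {K L : Type*} [Fintype K] [Fintype L]
    (μ : Measure Ω) (X : Ω → K) (Y : Ω → L) : ℝ :=
  shEnt μ X + shEnt μ Y - shEnt μ (fun ω => (X ω, Y ω))

/-- Conditional mutual information `I(X ; Y | Z)`. -/
noncomputable def condMutInfo {K L M : Type*} [Fintype K] [Fintype L] [Fintype M]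
    (μ : Measure Ω) (X : Ω → K) (Y : Ω → L) (Z : Ω → M) : ℝ :=
  condEnt μ X Z + condEnt μ Y Z - condEnt μ (fun ω => (X ω, Y ω)) Z

/-- The joint random variable of a family of random variables. -/
def joint {ι : Type*} {K : ι → Type*} (X : ∀ i, Ω → K i) : Ω → ∀ i, K i :=
  fun ω i => X i ω

/-- Total correlation `TC(X₁;…;Xₙ)`. -/
noncomputable def TC {ι : Type*} [Fintype ι] [DecidableEq ι] {K : ι → Type*}
    [∀ i, Fintype (K i)] (μ : Measure Ω) (X : ∀ i, Ω → K i) : ℝ :=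
  (∑ i, shEnt μ (X i)) - shEnt μ (joint X)

/-- Dual total correlation `DTC(X₁;…;Xₙ)`. -/
noncomputable def DTC {ι : Type*} [Fintype ι] [DecidableEq ι] {K : ι → Type*}
    [∀ i, Fintype (K i)] (μ : Measure Ω) (X : ∀ i, Ω → K i) : ℝ :=
  shEnt μ (joint X) - ∑ i, condEnt μ (X i) (joint fun j : {j : ι // j ≠ i} => X j.1)

/-- Conditional total correlation `TC(X₁;…;Xₙ | Y)`. -/
noncomputable def condTC {ι : Type*} [Fintype ι] [DecidableEq ι] {K : ι → Type*}
    [∀ i, Fintype (K i)] {L : Type*} [Fintype L]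
    (μ : Measure Ω) (X : ∀ i, Ω → K i) (Y : Ω → L) : ℝ :=
  (∑ i, condEnt μ (X i) Y) - condEnt μ (joint X) Y

/-- Conditional dual total correlation `DTC(X₁;…;Xₙ | Y)`. -/
noncomputable def condDTC {ι : Type*} [Fintype ι] [DecidableEq ι] {K : ι → Type*}
    [∀ i, Fintype (K i)] {L : Type*} [Fintype L]
    (μ : Measure Ω) (X : ∀ i, Ω → K i) (Y : Ω → L) : ℝ :=
  condEnt μ (joint X) Y -
    ∑ i, condEnt μ (X i)
      (fun ω => (joint (fun j : {j : ι // j ≠ i} => X j.1) ω, Y ω))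

/-!
Every quantity in the identity is a signed sum of joint entropies `H(X_S)`, and entropy is
invariant under injective relabelling of values, so it suffices to compare these sums. Writing
`s` for the removed index and `Z_i = X_{[n-1]∖i}`, one has
`DTC(X) = H(X_{[n]∖s}) - ∑_{i ≠ s} (H(X) - H(X_{[n]∖i}))`,
`DTC(X_{[n]∖s}) = H(X_{[n]∖s}) - ∑_{i ≠ s} (H(X_{[n]∖s}) - H(Z_i))` and
`I(X_i ; X_s | Z_i) = H(X_{[n]∖s}) + H(X_{[n]∖i}) - H(Z_i) - H(X)`,
and the two sides agree after collecting terms.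
-/

section Entropy

variable (μ : Measure Ω)

theorem shEnt_comp_of_injective {K L : Type*} [Fintype K] [Fintype L] (X : Ω → K)
    {f : K → L} (hf : f.Injective) : shEnt μ (fun ω => f (X ω)) = shEnt μ X := by
  classical
  refine (Fintype.sum_of_injective f hf _ _ (fun l hl => ?_) fun k => ?_).symm
  · have hempty : (fun ω => f (X ω)) ⁻¹' {l} = ∅ :=
      Set.eq_empty_of_forall_notMem fun ω h => hl ⟨X ω, h⟩
    simp [hempty]
  · congr 3
    ext ω
    simp [hf.eq_iff]

variable {ι : Type*} [Fintype ι] [DecidableEq ι] {K : ι → Type*} [∀ i, Fintype (K i)]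
  (X : ∀ i, Ω → K i)

theorem shEnt_pair_joint_ne (i : ι) :
    shEnt μ (fun ω => (X i ω, joint (fun j : {j // j ≠ i} => X j.1) ω)) =
      shEnt μ (joint X) := by
  refine shEnt_comp_of_injective μ (joint X)
    (f := fun (a : ∀ k, K k) => (a i, fun j : {j // j ≠ i} => a j.1)) ?_
  intro a b hab
  funext k
  by_cases hk : k = i
  · subst hk
    exact congrArg Prod.fst hab
  · exact congrFun (congrArg Prod.snd hab) ⟨k, hk⟩

theorem condEnt_joint_ne (i : ι) :
    condEnt μ (X i) (joint fun j : {j // j ≠ i} => X j.1) =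
      shEnt μ (joint X) - shEnt μ (joint fun j : {j // j ≠ i} => X j.1) := by
  rw [condEnt, shEnt_pair_joint_ne]

theorem dtc_eq_shEnt_sub_sum :
    DTC μ X = shEnt μ (joint X) -
      ∑ i, (shEnt μ (joint X) - shEnt μ (joint fun j : {j // j ≠ i} => X j.1)) := by
  simp only [DTC, condEnt_joint_ne]

variable {p : ι → Prop} [DecidablePred p] {s : ι}

theorem sum_eq_add_sum_subtype_of_iff_ne {M : Type*} [AddCommMonoid M] (hp : ∀ j, p j ↔ j ≠ s)
    (f : ι → M) : ∑ i, f i = f s + ∑ i : {j // p j}, f i.1 := by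
  rw [Fintype.sum_eq_add_sum_subtype_ne f s]
  congr 1
  exact Fintype.sum_equiv (Equiv.subtypeEquivRight fun j => (hp j).symm) _ _ fun _ => rfl

theorem shEnt_joint_ne_eq_shEnt_joint_subtype (hp : ∀ j, p j ↔ j ≠ s) :
    shEnt μ (joint fun j : {j // j ≠ s} => X j.1) =
      shEnt μ (joint fun j : {j // p j} => X j.1) := by
  refine (shEnt_comp_of_injective μ _
    (f := fun (a : ∀ k : {k // k ≠ s}, K k) (j : {j // p j}) => a ⟨j.1, (hp _).1 j.2⟩)
    ?_).symm
  intro a b hab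
  funext j
  exact congrFun hab ⟨j.1, (hp _).2 j.2⟩

theorem shEnt_joint_ne_eq_shEnt_pair (hp : ∀ j, p j ↔ j ≠ s) (i : {j // p j}) :
    shEnt μ (joint fun j : {j // j ≠ i.1} => X j.1) =
      shEnt μ (fun ω => (X s ω, joint (fun j : {j : {j // p j} // j ≠ i} => X j.1.1) ω)) := by
  have hsi : s ≠ i.1 := fun h => (hp _).1 (h ▸ i.2) rfl
  refine (shEnt_comp_of_injective μ _
    (f := fun (a : ∀ k : {k // k ≠ i.1}, K k) => (a ⟨s, hsi⟩,
      fun j : {j : {j // p j} // j ≠ i} => a ⟨j.1.1, fun h => j.2 (Subtype.ext h)⟩)) ?_).symm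
  intro a b hab
  funext k
  by_cases hks : k.1 = s
  · obtain rfl : k = ⟨s, hsi⟩ := Subtype.ext hks
    exact congrArg Prod.fst hab
  · exact congrFun (congrArg Prod.snd hab)
      ⟨⟨k.1, (hp _).2 hks⟩, fun h => k.2 (congrArg Subtype.val h)⟩

theorem shEnt_pair_pair_joint_subtype_ne (hp : ∀ j, p j ↔ j ≠ s) (i : {j // p j}) :
    shEnt μ (fun ω =>
        ((X i.1 ω, X s ω), joint (fun j : {j : {j // p j} // j ≠ i} => X j.1.1) ω)) =
      shEnt μ (joint X) := by
  refine shEnt_comp_of_injective μ (joint X) (f := fun (a : ∀ k, K k) =>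
    ((a i.1, a s), fun j : {j : {j // p j} // j ≠ i} => a j.1.1)) ?_
  intro a b hab
  funext k
  by_cases hki : k = i.1
  · subst hki
    exact congrArg Prod.fst (congrArg Prod.fst hab)
  by_cases hks : k = s
  · subst hks
    exact congrArg Prod.snd (congrArg Prod.fst hab)
  exact congrFun (congrArg Prod.snd hab)
    ⟨⟨k, (hp k).2 hks⟩, fun h => hki (congrArg Subtype.val h)⟩

theorem condMutInfo_eq_shEnt (hp : ∀ j, p j ↔ j ≠ s) (i : {j // p j}) :
    condMutInfo μ (X i.1) (X s) (joint fun j : {j : {j // p j} // j ≠ i} => X j.1.1) =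
      shEnt μ (joint fun j : {j // p j} => X j.1) +
        shEnt μ (joint fun j : {j // j ≠ i.1} => X j.1)
        - shEnt μ (joint fun j : {j : {j // p j} // j ≠ i} => X j.1.1) - shEnt μ (joint X) := by
  rw [condMutInfo, condEnt, condEnt, condEnt,
    shEnt_pair_joint_ne μ (fun j : {j // p j} => X j.1), shEnt_joint_ne_eq_shEnt_pair μ X hp,
    shEnt_pair_pair_joint_subtype_ne μ X hp]
  ring

theorem dtc_eq_dtc_subtype_add_sum_condMutInfo (hp : ∀ j, p j ↔ j ≠ s) :
    DTC μ X = DTC μ (fun j : {j // p j} => X j.1) +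
      ∑ i : {j // p j}, condMutInfo μ (X i.1) (X s)
        (joint fun j : {j : {j // p j} // j ≠ i} => X j.1.1) := by
  rw [dtc_eq_shEnt_sub_sum, dtc_eq_shEnt_sub_sum, sum_eq_add_sum_subtype_of_iff_ne hp,
    shEnt_joint_ne_eq_shEnt_joint_subtype μ X hp]
  simp only [condMutInfo_eq_shEnt μ X hp, Finset.sum_sub_distrib, Finset.sum_add_distrib]
  ring

end Entropy

/-- For `n ≥ 3` and finite-valued random variables `X₁, …, Xₙ`,
`DTC(X₁;…;Xₙ) = DTC(X₁;…;X_{n−1}) + ∑_{i=1}^{n−1} I(Xᵢ ; Xₙ | X_{[n−1]∖i})`. -/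
theorem dtc_recursion (μ : Measure Ω)
    {n : ℕ} (hn : 3 ≤ n) {K : Fin n → Type*} [∀ i, Fintype (K i)]
    (X : ∀ i, Ω → K i) :
    DTC μ X = DTC μ (fun j : {j : Fin n // j.1 < n - 1} => X j.1)
      + ∑ i : {j : Fin n // j.1 < n - 1},
          condMutInfo μ (X i.1) (X ⟨n - 1, by omega⟩)
            (joint fun j : {j : {j : Fin n // j.1 < n - 1} // j ≠ i} => X j.1.1) :=
  dtc_eq_dtc_subtype_add_sum_condMutInfo μ X
    (p := fun j => j.1 < n - 1) (s := ⟨n - 1, by omega⟩)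
    fun j => by
      simp only [ne_eq, Fin.ext_iff]
      omega

end Corr
end

section
/- Let X₁, …, Xₙ be finite-valued random variables on a common probability space, let [n] = S₁ ∪ ⋯ ∪ S_m be a partition into non-empty subsets, and for each j let Y_j := X_{S_j} be the clumped random variable, enumerating S_j = {k_{j,1} < ⋯ < k_{j,s_j}}. Then DTC(X₁;…;Xₙ) = DTC(Y₁;…;Y_m) + ∑_{j=1}^m DTC(X_{k_{j,1}};…;X_{k_{j,s_j}} | X_{[n]∖S_j}), with the convention that DTC of a single random variable is 0. -/
/-!
Every entropy occurring in the three dual total correlations is the entropy `H(X_U)` of a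
subfamily `X_U = (Xᵢ)_{i ∈ U}`, because the random variable in question (a pair, a tuple of
tuples, a family over a subtype of a subtype) and `X_U` are functions of each other. In these
terms `DTC(X) = H(X) − ∑ᵢ (H(X) − H(X_{[n]∖i}))`, `DTC(Y) = H(X) − ∑ⱼ (H(X) − H(X_{[n]∖Sⱼ}))`,
and the `j`-th conditional term is `H(X) − H(X_{[n]∖Sⱼ}) − ∑_{i ∈ Sⱼ} (H(X) − H(X_{[n]∖i}))`.
Summing over `j` and splitting `∑ᵢ` along the partition gives the identity.
-/

open MeasureTheory Real

namespace Corr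

variable {Ω : Type*}

def Determines {A B : Type*} (Z : Ω → A) (W : Ω → B) : Prop :=
  ∃ f : A → B, ∀ ω, W ω = f (Z ω)

namespace Determines

variable {A B C : Type*} {Z : Ω → A} {W W₁ : Ω → B} {W₂ V : Ω → C}

theorem trans (h₁ : Determines Z W) (h₂ : Determines W V) : Determines Z V := by
  obtain ⟨f, hf⟩ := h₁
  obtain ⟨g, hg⟩ := h₂
  exact ⟨g ∘ f, fun ω => by rw [hg, hf, Function.comp_apply]⟩

theorem prod (h₁ : Determines Z W₁) (h₂ : Determines Z W₂) :
    Determines Z fun ω => (W₁ ω, W₂ ω) := by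
  obtain ⟨f, hf⟩ := h₁
  obtain ⟨g, hg⟩ := h₂
  exact ⟨fun z => (f z, g z), fun ω => Prod.ext (hf ω) (hg ω)⟩

theorem fst : Determines (fun ω => (W₁ ω, W₂ ω)) W₁ := ⟨Prod.fst, fun _ => rfl⟩

theorem snd : Determines (fun ω => (W₁ ω, W₂ ω)) W₂ := ⟨Prod.snd, fun _ => rfl⟩

variable {ι : Type*} {K : ι → Type*}

theorem pi {X : ∀ i, Ω → K i} (h : ∀ i, Determines Z (X i)) : Determines Z (joint X) := by
  choose f hf using h
  exact ⟨fun z i => f i z, fun ω => funext fun i => hf i ω⟩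

theorem apply (X : ∀ i, Ω → K i) (i : ι) : Determines (joint X) (X i) :=
  ⟨fun z => z i, fun _ => rfl⟩

theorem restrict (X : ∀ i, Ω → K i) {U : Finset ι} {i : ι} (hi : i ∈ U) :
    Determines (joint fun j : U => X j) (X i) :=
  apply (fun j : U => X j) ⟨i, hi⟩

theorem joint_ne [DecidableEq ι] (X : ∀ i, Ω → K i) (i : ι) :
    Determines (joint X) (joint fun j : {j // j ≠ i} => X j.1) :=
  pi fun j => apply X j.1

theorem joint_of_ne [DecidableEq ι] {X : ∀ i, Ω → K i} {i : ι} (hi : Determines Z (X i))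
    (hne : Determines Z (joint fun j : {j // j ≠ i} => X j.1)) : Determines Z (joint X) :=
  pi fun k => if hk : k = i then hk ▸ hi
    else hne.trans (apply (fun j : {j // j ≠ i} => X j.1) ⟨k, hk⟩)

end Determines

variable [MeasurableSpace Ω]

section Entropy

variable {K L : Type*} [Fintype K] [Fintype L] (μ : Measure Ω)

theorem shEnt_comp_of_injective_s9 (Z : Ω → K) {e : K → L} (he : Function.Injective e) :
    shEnt μ (fun ω => e (Z ω)) = shEnt μ Z := by
  classical
  refine (Fintype.sum_of_injective e he _ _ (fun l hl => ?_) fun k => ?_).symm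
  · have hempty : (fun ω => e (Z ω)) ⁻¹' {l} = ∅ :=
      Set.eq_empty_of_forall_notMem fun ω hω => hl ⟨Z ω, hω⟩
    simp [hempty]
  · have hpre : (fun ω => e (Z ω)) ⁻¹' {e k} = Z ⁻¹' {k} := by
      ext ω
      simp [he.eq_iff]
    rw [hpre]

theorem shEnt_eq_of_determines {Z : Ω → K} {W : Ω → L} (hZW : Determines Z W)
    (hWZ : Determines W Z) : shEnt μ W = shEnt μ Z := by
  obtain ⟨f, hf⟩ := hZW
  obtain ⟨g, hg⟩ := hWZ
  calc shEnt μ W = shEnt μ (fun ω => (W ω, g (W ω))) :=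
        (shEnt_comp_of_injective_s9 μ W (e := fun w => (w, g w))
          fun _ _ h => congrArg Prod.fst h).symm
    _ = shEnt μ (fun ω => (f (Z ω), Z ω)) := by simp only [← hf, ← hg]
    _ = shEnt μ Z :=
        shEnt_comp_of_injective_s9 μ Z (e := fun z => (f z, z)) fun _ _ h => congrArg Prod.snd h

end Entropy

open Finset Function

theorem sum_eq_sum_sum_of_partition {ι κ M : Type*} [Fintype ι] [DecidableEq ι]
    [Fintype κ] [AddCommMonoid M] {S : κ → Finset ι} (hdisj : Pairwise (Disjoint on S))
    (hcover : ∀ i, ∃ j, i ∈ S j) (f : ι → M) : ∑ i, f i = ∑ j, ∑ i ∈ S j, f i := by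
  rw [← sum_biUnion fun j _ j' _ h => hdisj h]
  congr
  ext i
  simpa using hcover i

section Subfamilies

variable {ι : Type*} [DecidableEq ι] {K : ι → Type*} [∀ i, Fintype (K i)] (μ : Measure Ω)

noncomputable def shEntOn (X : ∀ i, Ω → K i) (U : Finset ι) : ℝ :=
  shEnt μ (joint fun i : U => X i)

theorem shEnt_eq_shEntOn {X : ∀ i, Ω → K i} {B : Type*} [Fintype B] {W : Ω → B} (U : Finset ι)
    (h₁ : Determines (joint fun i : U => X i) W) (h₂ : ∀ i ∈ U, Determines W (X i)) :
    shEnt μ W = shEntOn μ X U :=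
  shEnt_eq_of_determines μ h₁ (Determines.pi fun i => h₂ i i.2)

variable [Fintype ι]

theorem shEnt_apply_prod_joint_ne (X : ∀ i, Ω → K i) (i : ι) :
    shEnt μ (fun ω => (X i ω, joint (fun j : {j // j ≠ i} => X j.1) ω)) = shEnt μ (joint X) :=
  shEnt_eq_of_determines μ ((Determines.apply X i).prod (Determines.joint_ne X i))
    (Determines.joint_of_ne Determines.fst Determines.snd)

theorem shEnt_apply_prod_joint_ne_prod (X : ∀ i, Ω → K i) (i : ι) {L : Type*} [Fintype L]
    (Y : Ω → L) :
    shEnt μ (fun ω => (X i ω, (joint (fun j : {j // j ≠ i} => X j.1) ω, Y ω)))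
      = shEnt μ (fun ω => (joint X ω, Y ω)) :=
  shEnt_eq_of_determines μ
    ((Determines.fst.trans (Determines.apply X i)).prod
      ((Determines.fst.trans (Determines.joint_ne X i)).prod Determines.snd))
    ((Determines.joint_of_ne Determines.fst (Determines.snd.trans Determines.fst)).prod
      (Determines.snd.trans Determines.snd))

theorem DTC_eq_sum (X : ∀ i, Ω → K i) :
    DTC μ X = shEnt μ (joint X)
      - ∑ i, (shEnt μ (joint X) - shEnt μ (joint fun j : {j // j ≠ i} => X j.1)) := by
  simp only [DTC, condEnt, shEnt_apply_prod_joint_ne]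

theorem condDTC_eq_sum (X : ∀ i, Ω → K i) {L : Type*} [Fintype L] (Y : Ω → L) :
    condDTC μ X Y = condEnt μ (joint X) Y
      - ∑ i, (shEnt μ (fun ω => (joint X ω, Y ω))
        - shEnt μ (fun ω => (joint (fun j : {j // j ≠ i} => X j.1) ω, Y ω))) := by
  simp only [condDTC, condEnt, shEnt_apply_prod_joint_ne_prod]

variable (X : ∀ i, Ω → K i)

theorem shEnt_joint_eq_shEntOn_univ : shEnt μ (joint X) = shEntOn μ X univ :=
  shEnt_eq_shEntOn μ univ (Determines.pi fun i => Determines.restrict X (mem_univ i))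
    fun i _ => Determines.apply X i

theorem shEnt_joint_ne_eq_shEntOn_compl (i : ι) :
    shEnt μ (joint fun j : {j // j ≠ i} => X j.1) = shEntOn μ X {i}ᶜ :=
  shEnt_eq_shEntOn μ _ (Determines.pi fun j => Determines.restrict X (by simpa using j.2))
    fun k hk => Determines.apply (fun j : {j // j ≠ i} => X j.1) ⟨k, by simpa using hk⟩

theorem DTC_eq_sum_shEntOn :
    DTC μ X = shEntOn μ X univ - ∑ i, (shEntOn μ X univ - shEntOn μ X {i}ᶜ) := by
  rw [DTC_eq_sum, shEnt_joint_eq_shEntOn_univ]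
  simp only [shEnt_joint_ne_eq_shEntOn_compl]

theorem shEnt_restrict_prod_restrict_compl (T : Finset ι) :
    shEnt μ (fun ω => (joint (fun i : T => X i) ω, joint (fun i : (Tᶜ : Finset ι) => X i) ω))
      = shEntOn μ X univ := by
  refine shEnt_eq_shEntOn μ univ
    ((Determines.pi fun _ => Determines.restrict X (mem_univ _)).prod
      (Determines.pi fun _ => Determines.restrict X (mem_univ _))) fun k _ => ?_
  by_cases hk : k ∈ T
  · exact Determines.fst.trans (Determines.restrict X hk)
  · exact Determines.snd.trans (Determines.restrict X (mem_compl.2 hk))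

theorem shEnt_restrict_ne_prod_restrict_compl (T : Finset ι) (i : T) :
    shEnt μ (fun ω => (joint (fun j : {j : T // j ≠ i} => X j.1.1) ω,
      joint (fun k : (Tᶜ : Finset ι) => X k) ω)) = shEntOn μ X {i.1}ᶜ := by
  have hT (j : {j : T // j ≠ i}) : j.1.1 ∈ ({i.1}ᶜ : Finset ι) := by
    simpa using fun h => j.2 (Subtype.ext h)
  have hTc (k : (Tᶜ : Finset ι)) : k.1 ∈ ({i.1}ᶜ : Finset ι) := by
    simpa using fun h : k.1 = i.1 => mem_compl.1 k.2 (h ▸ i.2)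
  refine shEnt_eq_shEntOn μ _
    ((Determines.pi fun j => Determines.restrict X (hT j)).prod
      (Determines.pi fun k => Determines.restrict X (hTc k))) fun k hk => ?_
  by_cases hkT : k ∈ T
  · have hki : (⟨k, hkT⟩ : T) ≠ i := fun h => by simp [← h] at hk
    exact Determines.fst.trans
      (Determines.apply (fun j : {j : T // j ≠ i} => X j.1.1) ⟨⟨k, hkT⟩, hki⟩)
  · exact Determines.snd.trans (Determines.restrict X (mem_compl.2 hkT))

theorem condDTC_restrict_eq_sum_shEntOn (T : Finset ι) :
    condDTC μ (fun i : T => X i) (joint fun i : (Tᶜ : Finset ι) => X i)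
      = (shEntOn μ X univ - shEntOn μ X Tᶜ)
        - ∑ i ∈ T, (shEntOn μ X univ - shEntOn μ X {i}ᶜ) := by
  rw [condDTC_eq_sum, condEnt, ← sum_coe_sort T]
  simp only [shEnt_restrict_prod_restrict_compl, shEnt_restrict_ne_prod_restrict_compl]
  rfl

variable {κ : Type*} [Fintype κ] [DecidableEq κ] {S : κ → Finset ι}

theorem shEnt_joint_clumps (hcover : ∀ i, ∃ j, i ∈ S j) :
    shEnt μ (joint fun j => joint fun i : S j => X i) = shEntOn μ X univ := by
  refine shEnt_eq_shEntOn μ univ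
    (Determines.pi fun _ => Determines.pi fun _ => Determines.restrict X (mem_univ _))
    fun i _ => ?_
  obtain ⟨j, hj⟩ := hcover i
  exact (Determines.apply _ j).trans (Determines.restrict X hj)

theorem shEnt_joint_clumps_ne (hdisj : Pairwise (Disjoint on S)) (hcover : ∀ i, ∃ j, i ∈ S j)
    (j : κ) :
    shEnt μ (joint fun j' : {j' // j' ≠ j} => joint fun i : S j'.1 => X i)
      = shEntOn μ X (S j)ᶜ := by
  refine shEnt_eq_shEntOn μ _ (Determines.pi fun j' => Determines.pi fun i =>
    Determines.restrict X (mem_compl.2 (disjoint_left.1 (hdisj j'.2) i.2))) fun i hi => ?_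
  obtain ⟨j', hj'⟩ := hcover i
  have hne : j' ≠ j := by
    rintro rfl
    exact mem_compl.1 hi hj'
  exact (Determines.apply _ ⟨j', hne⟩).trans (Determines.restrict X hj')

theorem DTC_clumps_eq_sum_shEntOn (hdisj : Pairwise (Disjoint on S))
    (hcover : ∀ i, ∃ j, i ∈ S j) :
    DTC μ (fun j => joint fun i : S j => X i)
      = shEntOn μ X univ - ∑ j, (shEntOn μ X univ - shEntOn μ X (S j)ᶜ) := by
  rw [DTC_eq_sum, shEnt_joint_clumps μ X hcover]
  simp only [shEnt_joint_clumps_ne μ X hdisj hcover]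

end Subfamilies

theorem dtc_clumping_general (μ : Measure Ω)
    {n m : ℕ} {K : Fin n → Type*} [∀ i, Fintype (K i)]
    (X : ∀ i, Ω → K i)
    (S : Fin m → Finset (Fin n))
    (hdisj : ∀ j j', j ≠ j' → Disjoint (S j) (S j'))
    (hcover : ∀ i : Fin n, ∃ j, i ∈ S j) :
    DTC μ X = DTC μ (fun j : Fin m => joint fun i : {x : Fin n // x ∈ S j} => X i.1)
      + ∑ j : Fin m, condDTC μ (fun i : {x : Fin n // x ∈ S j} => X i.1)
          (joint fun i : {x : Fin n // x ∈ (S j)ᶜ} => X i.1) := by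
  have hpairwise : Pairwise (Disjoint on S) := fun _ _ h => hdisj _ _ h
  have hpart := sum_eq_sum_sum_of_partition hpairwise hcover
    fun i => shEntOn μ X univ - shEntOn μ X {i}ᶜ
  rw [DTC_eq_sum_shEntOn, DTC_clumps_eq_sum_shEntOn μ X hpairwise hcover]
  simp only [condDTC_restrict_eq_sum_shEntOn]
  rw [hpart]
  simp only [sum_sub_distrib]
  ring

/-- **DTC clumping rule.** For a partition `[n] = S₁ ∪ ⋯ ∪ S_m` into non-empty
subsets and clumped variables `Y_j := X_{S_j}`,
`DTC(X₁;…;Xₙ) = DTC(Y₁;…;Y_m) + ∑_j DTC((Xᵢ)_{i ∈ S_j} | X_{[n]∖S_j})`. -/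
theorem dtc_clumping (μ : Measure Ω) [IsProbabilityMeasure μ]
    {n m : ℕ} {K : Fin n → Type*} [∀ i, Fintype (K i)]
    [∀ i, MeasurableSpace (K i)] [∀ i, MeasurableSingletonClass (K i)]
    (X : ∀ i, Ω → K i) (hX : ∀ i, Measurable (X i))
    (S : Fin m → Finset (Fin n)) (hne : ∀ j, (S j).Nonempty)
    (hdisj : ∀ j j', j ≠ j' → Disjoint (S j) (S j'))
    (hcover : ∀ i : Fin n, ∃ j, i ∈ S j) :
    DTC μ X = DTC μ (fun j : Fin m => joint fun i : {x : Fin n // x ∈ S j} => X i.1)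
      + ∑ j : Fin m, condDTC μ (fun i : {x : Fin n // x ∈ S j} => X i.1)
          (joint fun i : {x : Fin n // x ∈ (S j)ᶜ} => X i.1) :=
  dtc_clumping_general μ X S hdisj hcover

end Corr
end
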